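/- arXiv:2412.10042 — 2 statements merged into one kernel-verified Lean document; each statement's English description precedes it below -/
import Mathlib

section
/- With the same recurrence setup in ℂ⟦x, y⟧ (g_t = y, g_{t+1} = x, g_{s−1} + P_s(g_s) + g_{s+1} = 0, each P_s ∈ T·ℂ⟦T⟧), fix 1 ≤ s ≤ N−1 and let c be the coefficient of T in P_s. Then: (a) if c ≠ 0, the ideal (g_{s−1}, g_{s+1}) equals the maximal ideal (x, y); (b) if c = 0, the ideal (g_{s−1}, g_{s+1}) is strictly contained in (x, y). -/
open MvPowerSeries

/-- Substitution of an element `g` of `ℂ⟦x,y⟧` (with zero constant term) into a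
one-variable power series `P`, computed coefficientwise by a finite sum. -/
noncomputable def substC (P : PowerSeries ℂ) (g : MvPowerSeries (Fin 2) ℂ) :
    MvPowerSeries (Fin 2) ℂ :=
  fun d => ∑ n ∈ Finset.range (d.sum (fun _ e => e) + 1),
    PowerSeries.coeff n P * MvPowerSeries.coeff d (g ^ n)

namespace StmtFiveAux

/-- The total degree of a monomial exponent. -/
def deg (d : Fin 2 →₀ ℕ) : ℕ := d.sum fun _ e => e

lemma deg_add (a b : Fin 2 →₀ ℕ) : deg (a + b) = deg a + deg b :=
  Finsupp.sum_add_index' (fun _ => rfl) (fun _ _ _ => rfl)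

lemma eq_zero_of_deg_eq_zero {d : Fin 2 →₀ ℕ} (h : deg d = 0) : d = 0 := by
  ext i
  by_cases hi : i ∈ d.support
  · exact (Finset.sum_eq_zero_iff.mp h i hi)
  · simpa using Finsupp.notMem_support_iff.mp hi

lemma deg_single (i : Fin 2) : deg (Finsupp.single i 1) = 1 := by
  simp [deg, Finsupp.sum_single_index]

lemma coeff_substC (P : PowerSeries ℂ) (g : MvPowerSeries (Fin 2) ℂ)
    (d : Fin 2 →₀ ℕ) :
    MvPowerSeries.coeff d (substC P g) = ∑ n ∈ Finset.range (deg d + 1),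
      PowerSeries.coeff n P * MvPowerSeries.coeff d (g ^ n) := rfl

lemma coeff_pow_eq_zero {g : MvPowerSeries (Fin 2) ℂ}
    (hg : constantCoeff g = 0) :
    ∀ n (d : Fin 2 →₀ ℕ), deg d < n → MvPowerSeries.coeff d (g ^ n) = 0 := by
  intro n
  induction n with
  | zero => intro d hd; omega
  | succ n ih =>
    intro d hd
    rw [pow_succ', coeff_mul]
    apply Finset.sum_eq_zero
    intro p hp
    rcases eq_or_ne p.1 0 with h1 | h1
    · rw [h1, coeff_zero_eq_constantCoeff_apply, hg, zero_mul]
    · have hps : p.1 + p.2 = d := Finset.HasAntidiagonal.mem_antidiagonal.mp hp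
      have hdeg : deg p.1 + deg p.2 = deg d := by rw [← deg_add, hps]
      have hne : deg p.1 ≠ 0 := fun h0 => h1 (eq_zero_of_deg_eq_zero h0)
      rw [ih p.2 (by omega), mul_zero]

lemma constantCoeff_substC (P : PowerSeries ℂ) (g : MvPowerSeries (Fin 2) ℂ) :
    constantCoeff (substC P g) = PowerSeries.constantCoeff P := by
  rw [← coeff_zero_eq_constantCoeff_apply, coeff_substC]
  have h0 : deg (0 : Fin 2 →₀ ℕ) = 0 := rfl
  rw [h0]
  simp [MvPowerSeries.coeff_one, PowerSeries.coeff_zero_eq_constantCoeff]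

lemma coeff_deg_one_substC {P : PowerSeries ℂ}
    (hP : PowerSeries.constantCoeff P = 0) (g : MvPowerSeries (Fin 2) ℂ)
    {d : Fin 2 →₀ ℕ} (hd : deg d = 1) :
    MvPowerSeries.coeff d (substC P g)
      = PowerSeries.coeff 1 P * MvPowerSeries.coeff d g := by
  rw [coeff_substC, hd]
  have hd0 : d ≠ 0 := by
    intro h; rw [h] at hd; exact absurd hd (by simp [deg])
  rw [Finset.sum_range_succ, Finset.sum_range_one]
  simp [MvPowerSeries.coeff_one, hd0, PowerSeries.coeff_zero_eq_constantCoeff, hP]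

lemma substC_X_mul {g : MvPowerSeries (Fin 2) ℂ}
    (hg : constantCoeff g = 0) (Q : PowerSeries ℂ) :
    substC (PowerSeries.X * Q) g = g * substC Q g := by
  ext d
  rw [coeff_substC, coeff_mul]
  have h1 : ∀ p ∈ Finset.HasAntidiagonal.antidiagonal d,
      MvPowerSeries.coeff p.1 g * MvPowerSeries.coeff p.2 (substC Q g)
        = MvPowerSeries.coeff p.1 g *
            ∑ i ∈ Finset.range (deg d), PowerSeries.coeff i Q *
              MvPowerSeries.coeff p.2 (g ^ i) := by
    intro p hp
    rcases eq_or_ne p.1 0 with h | h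
    · rw [h, coeff_zero_eq_constantCoeff_apply, hg, zero_mul, zero_mul]
    · rw [coeff_substC]
      congr 1
      apply Finset.sum_subset
      · apply Finset.range_subset_range.2
        have hps : p.1 + p.2 = d := Finset.HasAntidiagonal.mem_antidiagonal.mp hp
        have hdeg : deg p.1 + deg p.2 = deg d := by rw [← deg_add, hps]
        have hne : deg p.1 ≠ 0 := fun h0 => h (eq_zero_of_deg_eq_zero h0)
        omega
      · intro i hi hi2
        rw [Finset.mem_range] at hi hi2
        rw [coeff_pow_eq_zero hg i p.2 (by omega), mul_zero]
  rw [Finset.sum_congr rfl h1, Finset.sum_range_succ']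
  have h0 : PowerSeries.coeff 0 (PowerSeries.X * Q)
      * MvPowerSeries.coeff d (g ^ 0) = 0 := by
    simp [PowerSeries.coeff_zero_eq_constantCoeff]
  rw [h0, add_zero]
  simp_rw [Finset.mul_sum]
  rw [Finset.sum_comm]
  apply Finset.sum_congr rfl
  intro i _
  rw [PowerSeries.coeff_succ_X_mul, pow_succ', coeff_mul, Finset.mul_sum]
  apply Finset.sum_congr rfl
  intro p _
  ring

lemma substC_mem_span {P : PowerSeries ℂ} {g : MvPowerSeries (Fin 2) ℂ}
    (hP : PowerSeries.constantCoeff P = 0)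
    (hg : constantCoeff g = 0) :
    substC P g ∈ Ideal.span ({g} : Set (MvPowerSeries (Fin 2) ℂ)) := by
  obtain ⟨Q, hQ⟩ := PowerSeries.X_dvd_iff.mpr hP
  rw [hQ, substC_X_mul hg]
  exact Ideal.mem_span_singleton.mpr ⟨substC Q g, rfl⟩

lemma coeff_mul_deg_one {a h : MvPowerSeries (Fin 2) ℂ}
    (hh : constantCoeff h = 0) {d : Fin 2 →₀ ℕ} (hd : deg d = 1) :
    MvPowerSeries.coeff d (a * h)
      = constantCoeff a * MvPowerSeries.coeff d h := by
  rw [coeff_mul, Finset.sum_eq_single ((0 : Fin 2 →₀ ℕ), d)]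
  · rw [coeff_zero_eq_constantCoeff_apply]
  · intro p hp hne
    have hps : p.1 + p.2 = d := Finset.HasAntidiagonal.mem_antidiagonal.mp hp
    have hdeg : deg p.1 + deg p.2 = 1 := by rw [← deg_add, hps, hd]
    by_cases h1 : deg p.1 = 0
    · have hz : p.1 = 0 := eq_zero_of_deg_eq_zero h1
      have : p = (0, d) := by
        have : p.2 = d := by rw [hz, zero_add] at hps; exact hps
        exact Prod.ext hz this
      exact absurd this hne
    · have h2 : p.2 = 0 := eq_zero_of_deg_eq_zero (by omega)
      rw [h2, coeff_zero_eq_constantCoeff_apply, hh, mul_zero]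
  · intro hnot
    exact absurd (Finset.HasAntidiagonal.mem_antidiagonal.mpr (zero_add d)) hnot

end StmtFiveAux

open StmtFiveAux in
/-- With `g t = y`, `g (t+1) = x` and `g (s−1) + P_s(g_s) + g (s+1) = 0` for
`1 ≤ s ≤ N−1`, fix `1 ≤ s ≤ N−1` and let `c` be the linear coefficient of `P s`.
If `c ≠ 0` then `(g (s−1), g (s+1)) = (x, y)`; if `c = 0` then
`(g (s−1), g (s+1)) ⊊ (x, y)`. -/
theorem stmt_5 (N : ℕ) (hN : 2 ≤ N) (t : ℕ) (ht : t ≤ N - 1)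
    (P : ℕ → PowerSeries ℂ)
    (hP : ∀ s, 1 ≤ s → s ≤ N - 1 → PowerSeries.constantCoeff (P s) = 0)
    (g : ℕ → MvPowerSeries (Fin 2) ℂ)
    (hgt : g t = MvPowerSeries.X 1) (hgt1 : g (t + 1) = MvPowerSeries.X 0)
    (hrec : ∀ s, 1 ≤ s → s ≤ N - 1 → g (s - 1) + substC (P s) (g s) + g (s + 1) = 0)
    (s : ℕ) (hs1 : 1 ≤ s) (hs : s ≤ N - 1) :
    (PowerSeries.coeff 1 (P s) ≠ 0 →
      Ideal.span ({g (s - 1), g (s + 1)} : Set (MvPowerSeries (Fin 2) ℂ)) =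
        Ideal.span ({MvPowerSeries.X 0, MvPowerSeries.X 1} :
          Set (MvPowerSeries (Fin 2) ℂ))) ∧
    (PowerSeries.coeff 1 (P s) = 0 →
      Ideal.span ({g (s - 1), g (s + 1)} : Set (MvPowerSeries (Fin 2) ℂ)) <
        Ideal.span ({MvPowerSeries.X 0, MvPowerSeries.X 1} :
          Set (MvPowerSeries (Fin 2) ℂ))) := by
  set m : Ideal (MvPowerSeries (Fin 2) ℂ) :=
    Ideal.span ({MvPowerSeries.X 0, MvPowerSeries.X 1} :
      Set (MvPowerSeries (Fin 2) ℂ)) with hm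
  -- constant coefficient relation along the recurrence
  have hcc : ∀ k, 1 ≤ k → k ≤ N - 1 →
      constantCoeff (g (k - 1)) = - constantCoeff (g (k + 1)) := by
    intro k hk1 hk2
    have h := congrArg (constantCoeff) (hrec k hk1 hk2)
    rw [map_add, map_add, constantCoeff_substC, hP k hk1 hk2, map_zero] at h
    linear_combination h
  -- span step
  have hspanstep : ∀ k, 1 ≤ k → k ≤ N - 1 → constantCoeff (g k) = 0 →
      Ideal.span ({g (k - 1), g k} : Set (MvPowerSeries (Fin 2) ℂ))
        = Ideal.span ({g k, g (k + 1)} : Set (MvPowerSeries (Fin 2) ℂ)) := by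
    intro k hk1 hk2 hck
    have hr := hrec k hk1 hk2
    have hsub := substC_mem_span (hP k hk1 hk2) hck
    apply le_antisymm
    · rw [Ideal.span_le]
      intro x hx
      simp only [Set.mem_insert_iff, Set.mem_singleton_iff] at hx
      rcases hx with rfl | rfl
      · have heq : g (k - 1) = -(substC (P k) (g k)) - g (k + 1) := by
          linear_combination hr
        rw [heq]
        refine sub_mem (neg_mem ?_) (Ideal.subset_span (by simp))
        exact Ideal.span_mono (Set.singleton_subset_iff.mpr (Set.mem_insert _ _)) hsub
      · exact Ideal.subset_span (Set.mem_insert _ _)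
    · rw [Ideal.span_le]
      intro x hx
      simp only [Set.mem_insert_iff, Set.mem_singleton_iff] at hx
      rcases hx with rfl | rfl
      · exact Ideal.subset_span (by simp)
      · have heq : g (k + 1) = -(g (k - 1)) - substC (P k) (g k) := by
          linear_combination hr
        rw [heq]
        refine sub_mem (neg_mem (Ideal.subset_span (Set.mem_insert _ _))) ?_
        exact Ideal.span_mono (Set.singleton_subset_iff.mpr (by simp)) hsub
  -- invariant
  set E : ℕ → Prop := fun k =>
    Ideal.span ({g k, g (k + 1)} : Set (MvPowerSeries (Fin 2) ℂ)) = m ∧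
      constantCoeff (g k) = 0 ∧ constantCoeff (g (k + 1)) = 0
    with hE
  have hEt : E t := by
    refine ⟨?_, ?_, ?_⟩
    · rw [hgt, hgt1, hm, Set.pair_comm]
    · rw [hgt, constantCoeff_X]
    · rw [hgt1, constantCoeff_X]
  have hstepdown : ∀ k, 1 ≤ k → k ≤ N - 1 → E k → E (k - 1) := by
    rintro k hk1 hk2 ⟨hsp, hc0, hc1⟩
    obtain ⟨k, rfl⟩ : ∃ k', k = k' + 1 := ⟨k - 1, (Nat.succ_pred_eq_of_pos hk1).symm⟩
    have hkk : k + 1 - 1 = k := rfl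
    refine ⟨?_, ?_, ?_⟩
    · rw [show k + 1 - 1 = k from rfl] at *
      rw [← hsp]
      have := hspanstep (k + 1) hk1 hk2 hc0
      rw [hkk] at this
      exact this
    · rw [show k + 1 - 1 = k from rfl]
      have := hcc (k + 1) hk1 hk2
      rw [hkk] at this
      rw [this, hc1, neg_zero]
    · rw [show k + 1 - 1 = k from rfl]
      exact hc0
  have hstepup : ∀ k, 1 ≤ k → k ≤ N - 1 → E (k - 1) → E k := by
    rintro k hk1 hk2 hEk
    obtain ⟨k, rfl⟩ : ∃ k', k = k' + 1 := ⟨k - 1, (Nat.succ_pred_eq_of_pos hk1).symm⟩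
    rw [show k + 1 - 1 = k from rfl] at hEk
    obtain ⟨hsp, hc0, hc1⟩ := hEk
    have hsp2 := hspanstep (k + 1) hk1 hk2 hc1
    rw [show k + 1 - 1 = k from rfl] at hsp2
    have hc2 := hcc (k + 1) hk1 hk2
    rw [show k + 1 - 1 = k from rfl] at hc2
    refine ⟨by rw [← hsp2, hsp], hc1, ?_⟩
    rw [hc0] at hc2
    exact neg_eq_zero.mp hc2.symm
  have hEdown : ∀ j, j ≤ t → E (t - j) := by
    intro j
    induction j with
    | zero => intro _; simpa using hEt
    | succ j ih =>
      intro hj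
      have h1 : t - (j + 1) = (t - j) - 1 := by omega
      rw [h1]
      exact hstepdown (t - j) (by omega) (by omega) (ih (by omega))
  have hEup : ∀ j, t + j ≤ N - 1 → E (t + j) := by
    intro j
    induction j with
    | zero => intro _; simpa using hEt
    | succ j ih =>
      intro hj
      have := hstepup (t + j + 1) (by omega) (by omega)
        (by rw [show t + j + 1 - 1 = t + j from rfl]; exact ih (by omega))
      simpa [← add_assoc] using this
  have hEs : E s := by
    rcases le_or_gt s t with h | h
    · have := hEdown (t - s) (by omega)
      rwa [show t - (t - s) = s by omega] at this
    · have := hEup (s - t) (by omega)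
      rwa [show t + (s - t) = s by omega] at this
  obtain ⟨hms, hcgs, hcgs1⟩ := hEs
  have hr := hrec s hs1 hs
  have hcgsm1 : constantCoeff (g (s - 1)) = 0 := by
    rw [hcc s hs1 hs, hcgs1, neg_zero]
  obtain ⟨Q, hQ⟩ := PowerSeries.X_dvd_iff.mpr (hP s hs1 hs)
  set u := substC Q (g s) with hu
  have hsubst : substC (P s) (g s) = g s * u := by rw [hQ, substC_X_mul hcgs]
  have hcu : constantCoeff u = PowerSeries.coeff 1 (P s) := by
    rw [hu, constantCoeff_substC, hQ, ← PowerSeries.coeff_zero_eq_constantCoeff_apply,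
      PowerSeries.coeff_succ_X_mul]
  -- membership of the ideal in m (both cases)
  have hle : Ideal.span ({g (s - 1), g (s + 1)} : Set (MvPowerSeries (Fin 2) ℂ)) ≤ m := by
    rw [Ideal.span_le]
    intro x hx
    simp only [Set.mem_insert_iff, Set.mem_singleton_iff] at hx
    rcases hx with rfl | rfl
    · rw [← hms, ← hspanstep s hs1 hs hcgs]
      exact Ideal.subset_span (Set.mem_insert _ _)
    · rw [← hms]
      exact Ideal.subset_span (by simp)
  constructor
  · -- case c ≠ 0
    intro hc
    rw [← hcu] at hc
    apply le_antisymm hle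
    rw [← hms, Ideal.span_le]
    have hgs_mem : g s ∈ Ideal.span ({g (s - 1), g (s + 1)} :
        Set (MvPowerSeries (Fin 2) ℂ)) := by
      have h1 : g s * u = -(g (s - 1)) - g (s + 1) := by
        rw [← hsubst]; linear_combination hr
      have heq : g s = (-(g (s - 1)) - g (s + 1)) * u⁻¹ := by
        calc g s = g s * (u * u⁻¹) := by
              rw [MvPowerSeries.mul_inv_cancel u hc, mul_one]
          _ = g s * u * u⁻¹ := by ring
          _ = _ := by rw [h1]
      rw [heq]
      exact Ideal.mul_mem_right _ _
        (sub_mem (neg_mem (Ideal.subset_span (Set.mem_insert _ _)))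
          (Ideal.subset_span (by simp)))
    intro x hx
    simp only [Set.mem_insert_iff, Set.mem_singleton_iff] at hx
    rcases hx with rfl | rfl
    · exact hgs_mem
    · exact Ideal.subset_span (by simp)
  · -- case c = 0
    intro hc
    refine lt_of_le_of_ne hle ?_
    intro heq
    -- linear coefficients
    have hlin : ∀ d : Fin 2 →₀ ℕ, deg d = 1 →
        MvPowerSeries.coeff d (g (s - 1)) = - MvPowerSeries.coeff d (g (s + 1)) := by
      intro d hd
      have h := congrArg (MvPowerSeries.coeff d) hr
      rw [map_add, map_add, map_zero, coeff_deg_one_substC (hP s hs1 hs) _ hd, hc,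
        zero_mul] at h
      linear_combination h
    set d0 : Fin 2 →₀ ℕ := Finsupp.single (0 : Fin 2) 1 with hd0
    set d1 : Fin 2 →₀ ℕ := Finsupp.single (1 : Fin 2) 1 with hd1
    have hdeg0 : deg d0 = 1 := deg_single 0
    have hdeg1 : deg d1 = 1 := deg_single 1
    set L0 := MvPowerSeries.coeff d0 (g (s + 1)) with hL0
    set L1 := MvPowerSeries.coeff d1 (g (s + 1)) with hL1
    -- coefficient of an ideal element at a degree-one monomial
    have hcoe : ∀ (a b : MvPowerSeries (Fin 2) ℂ) (d : Fin 2 →₀ ℕ), deg d = 1 →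
        MvPowerSeries.coeff d (a * g (s - 1) + b * g (s + 1))
          = (constantCoeff b - constantCoeff a)
              * MvPowerSeries.coeff d (g (s + 1)) := by
      intro a b d hd
      rw [map_add, coeff_mul_deg_one hcgsm1 hd, coeff_mul_deg_one hcgs1 hd, hlin d hd]
      ring
    have hX0 : (MvPowerSeries.X 0 : MvPowerSeries (Fin 2) ℂ) ∈
        Ideal.span ({g (s - 1), g (s + 1)} : Set (MvPowerSeries (Fin 2) ℂ)) := by
      rw [heq]; exact Ideal.subset_span (Set.mem_insert _ _)
    have hX1 : (MvPowerSeries.X 1 : MvPowerSeries (Fin 2) ℂ) ∈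
        Ideal.span ({g (s - 1), g (s + 1)} : Set (MvPowerSeries (Fin 2) ℂ)) := by
      rw [heq]; exact Ideal.subset_span (by simp)
    obtain ⟨a, b, hab⟩ := Ideal.mem_span_pair.mp hX0
    obtain ⟨a', b', hab'⟩ := Ideal.mem_span_pair.mp hX1
    have e00 : (constantCoeff b - constantCoeff a) * L0 = 1 := by
      rw [hL0, ← hcoe a b d0 hdeg0, hab, hd0, MvPowerSeries.coeff_X, if_pos rfl]
    have e01 : (constantCoeff b - constantCoeff a) * L1 = 0 := by
      rw [hL1, ← hcoe a b d1 hdeg1, hab, hd1, MvPowerSeries.coeff_X, if_neg]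
      intro h
      have := Finsupp.single_left_injective (α := Fin 2) (one_ne_zero) h
      exact absurd this (by decide)
    have e10 : (constantCoeff b' - constantCoeff a') * L0 = 0 := by
      rw [hL0, ← hcoe a' b' d0 hdeg0, hab', hd0, MvPowerSeries.coeff_X, if_neg]
      intro h
      have := Finsupp.single_left_injective (α := Fin 2) (one_ne_zero) h
      exact absurd this (by decide)
    have e11 : (constantCoeff b' - constantCoeff a') * L1 = 1 := by
      rw [hL1, ← hcoe a' b' d1 hdeg1, hab', hd1, MvPowerSeries.coeff_X, if_pos rfl]
    have hα : (constantCoeff b - constantCoeff a) ≠ 0 := by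
      intro h; rw [h, zero_mul] at e00; exact one_ne_zero e00.symm
    have hL1z : L1 = 0 := by
      rcases mul_eq_zero.mp e01 with h | h
      · exact absurd h hα
      · exact h
    rw [hL1z, mul_zero] at e11
    exact one_ne_zero e11.symm
end

section
/- Let λ ∈ ℂ with λ ≠ 0 and λ ≠ 1/4. Define S(λ) = {λ, (1−4λ)/4, 1/(4(1−4λ)), λ/(4λ−1), (4λ−1)/(16λ), 1/(16λ)} ⊆ ℂ. Then every element μ ∈ S(λ) satisfies μ ≠ 0 and μ ≠ 1/4, and moreover both (1−4μ)/4 ∈ S(λ) and 1/(16μ) ∈ S(λ). -/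
/-- The six-element flop orbit of the parameter `λ` of the potential `x² + xy + λy²`. -/
def flopOrbit (l : ℂ) : Set ℂ :=
  {l, (1 - 4*l)/4, 1/(4*(1 - 4*l)), l/(4*l - 1), (4*l - 1)/(16*l), 1/(16*l)}

/-- For `λ ≠ 0, 1/4`, every element `μ` of the orbit `S(λ)` satisfies `μ ≠ 0`,
`μ ≠ 1/4`, and the orbit is closed under `μ ↦ (1−4μ)/4` and `μ ↦ 1/(16μ)`. -/
theorem stmt_10 (l : ℂ) (h0 : l ≠ 0) (h4 : l ≠ 1/4) :
    ∀ μ ∈ flopOrbit l, μ ≠ 0 ∧ μ ≠ 1/4 ∧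
      (1 - 4*μ)/4 ∈ flopOrbit l ∧ 1/(16*μ) ∈ flopOrbit l := by
  have h1 : (1 : ℂ) - 4*l ≠ 0 := by
    intro h; apply h4; field_simp; linear_combination -h
  have h2 : 4*l - 1 ≠ 0 := by
    intro h; apply h1; linear_combination -h
  have h16 : (16 : ℂ) * l ≠ 0 := by
    exact mul_ne_zero (by norm_num) h0
  intro μ hμ
  simp only [flopOrbit, Set.mem_insert_iff, Set.mem_singleton_iff] at hμ ⊢
  rcases hμ with rfl | rfl | rfl | rfl | rfl | rfl
  · exact ⟨h0, h4, Or.inr (Or.inl rfl), Or.inr (Or.inr (Or.inr (Or.inr (Or.inr rfl))))⟩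
  · refine ⟨div_ne_zero h1 (by norm_num), ?_, Or.inl (by ring), Or.inr (Or.inr (Or.inl ?_))⟩
    · intro h; apply h0; field_simp at h; linear_combination (-1/4 : ℂ) * h
    · field_simp; try ring
  · refine ⟨div_ne_zero one_ne_zero (mul_ne_zero (by norm_num) h1), ?_,
      Or.inr (Or.inr (Or.inr (Or.inl ?_))), Or.inr (Or.inl ?_)⟩
    · intro h; apply h0; field_simp at h; linear_combination (1/4 : ℂ) * h
    · field_simp; try ring
    · field_simp; try ring
  · refine ⟨div_ne_zero h0 h2, ?_, Or.inr (Or.inr (Or.inl ?_)),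
      Or.inr (Or.inr (Or.inr (Or.inr (Or.inl ?_))))⟩
    · intro h; field_simp at h; rw [div_eq_one_iff_eq (by rw [mul_comm]; exact h2)] at h; exact one_ne_zero (by linear_combination h)
    · field_simp; try ring
    · field_simp; try ring
  · refine ⟨div_ne_zero h2 h16, ?_, Or.inr (Or.inr (Or.inr (Or.inr (Or.inr ?_)))),
      Or.inr (Or.inr (Or.inr (Or.inl ?_)))⟩
    · intro h; field_simp at h; exact one_ne_zero (by linear_combination (-1/4 : ℂ) * h)
    · field_simp; try ring
    · field_simp; try ring
  · refine ⟨div_ne_zero one_ne_zero h16, ?_, Or.inr (Or.inr (Or.inr (Or.inr (Or.inl ?_)))),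
      Or.inl ?_⟩
    · intro h; apply h4; field_simp at h ⊢; linear_combination (-1/4 : ℂ) * h
    · field_simp; try ring
    · field_simp
end
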